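/- Let γ > 0, α ∈ (0, 2), and let P : H → H satisfy, for every y ∈ H, that P(y) minimizes x ↦ f(x) + (1/(2γ))·‖x - y‖² over H. Define the generalized Douglas-Rachford operator T(z) = (1 - α)·z + α·(2·P(z) - z) (this is the Douglas-Rachford iteration for f and g ≡ 0, since R_{γg} = Id). Then for every index j and every k ≥ 0, the k-th iterate from initial point φ_j satisfies T^[k](φ_j) = (1 - α + α·(1 - γ·λ_j)/(1 + γ·λ_j))^k · φ_j, and hence ‖T^[k](φ_j)‖ = |1 - α + α·(1 - γ·λ_j)/(1 + γ·λ_j)|^k. -/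

import Mathlib

/-!
With `d = c / (1 + γ λⱼ)` the prox objective `F` for the data `c • φⱼ` satisfies the exact
splitting `F (h + d • φⱼ) = F (d • φⱼ) + f h + ‖h‖² / (2γ)`, the cross terms cancelling because
`d - c = -γ λⱼ d`. Since `f ≥ 0`, `d • φⱼ` is the unique minimizer, so `P (c • φⱼ) = d • φⱼ`.
Each Douglas–Rachford step therefore multiplies the coefficient on `φⱼ` by
`1 - α + α (1 - γλⱼ) / (1 + γλⱼ)`, and the iterates are its powers.
-/

open RealInnerProductSpace

section InnerProductSpace

variable {ι H : Type*} [NormedAddCommGroup H] [InnerProductSpace ℝ H]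

namespace HilbertBasis

variable (b : HilbertBasis ι ℝ H)

theorem hasSum_inner_sq (x : H) : HasSum (fun i => ⟪x, b i⟫ ^ 2) (‖x‖ ^ 2) := by
  simpa [sq, real_inner_comm, real_inner_self_eq_norm_sq] using b.hasSum_inner_mul_inner x x

theorem summable_mul_inner_sq {w : ι → ℝ} {C : ℝ} (hw : ∀ i, |w i| ≤ C) (x : H) :
    Summable (fun i => w i * ⟪x, b i⟫ ^ 2) :=
  ((b.hasSum_inner_sq x).summable.mul_left C).of_norm_bounded fun i => by
    rw [norm_mul, Real.norm_eq_abs, Real.norm_eq_abs, abs_sq]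
    exact mul_le_mul_of_nonneg_right (hw i) (sq_nonneg _)

theorem tsum_mul_inner_sq_add_smul {x : H} {w : ι → ℝ}
    (hw : Summable (fun i => w i * ⟪x, b i⟫ ^ 2)) (d : ℝ) (j : ι) :
    ∑' i, w i * ⟪x + d • b j, b i⟫ ^ 2 =
      ∑' i, w i * ⟪x, b i⟫ ^ 2 + w j * (2 * d * ⟪x, b j⟫ + d ^ 2) := by
  classical
  have hterm : ∀ i, w i * ⟪x + d • b j, b i⟫ ^ 2 =
      w i * ⟪x, b i⟫ ^ 2 + if i = j then w j * (2 * d * ⟪x, b j⟫ + d ^ 2) else 0 := by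
    intro i
    rw [inner_add_left, real_inner_smul_left, orthonormal_iff_ite.mp b.orthonormal j i]
    by_cases hij : i = j
    · subst hij; simp only [if_true]; ring
    · simp [hij, Ne.symm hij]
  rw [tsum_congr hterm, hw.tsum_add (hasSum_ite_eq j _).summable, tsum_ite_eq]

theorem norm_add_smul_sq (x : H) (e : ℝ) (j : ι) :
    ‖x + e • b j‖ ^ 2 = ‖x‖ ^ 2 + 2 * e * ⟪x, b j⟫ + e ^ 2 := by
  rw [norm_add_sq_real, real_inner_smul_right, norm_smul, b.orthonormal.1 j, Real.norm_eq_abs,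
    mul_one, sq_abs]
  ring

end HilbertBasis

section Prox

variable (b : HilbertBasis ι ℝ H) (lam : ι → ℝ) (γ : ℝ)

/-- The function minimized by `prox_{γf} y` for `f x = Σ' i, lam i / 2 * ⟪x, b i⟫ ^ 2`. -/
noncomputable def proxObjective (y x : H) : ℝ :=
  ∑' i, lam i / 2 * ⟪x, b i⟫ ^ 2 + 1 / (2 * γ) * ‖x - y‖ ^ 2

variable {b lam γ}

theorem proxObjective_smul_add {c d : ℝ} {j : ι} (hγ : γ ≠ 0) (hd : d * (1 + γ * lam j) = c)
    {h : H} (hh : Summable fun i => lam i / 2 * ⟪h, b i⟫ ^ 2) :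
    proxObjective b lam γ (c • b j) (h + d • b j) =
      proxObjective b lam γ (c • b j) (d • b j) + proxObjective b lam γ 0 h := by
  have hexpand : ∀ x : H, (Summable fun i => lam i / 2 * ⟪x, b i⟫ ^ 2) →
      proxObjective b lam γ (c • b j) (x + d • b j) =
        ∑' i, lam i / 2 * ⟪x, b i⟫ ^ 2 + lam j / 2 * (2 * d * ⟪x, b j⟫ + d ^ 2) +
          1 / (2 * γ) * (‖x‖ ^ 2 + 2 * (d - c) * ⟪x, b j⟫ + (d - c) ^ 2) := fun x hx => by
    rw [proxObjective, b.tsum_mul_inner_sq_add_smul hx, add_sub_assoc, ← sub_smul,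
      b.norm_add_smul_sq]
  have hexpand₀ := hexpand 0 (by simp)
  rw [zero_add] at hexpand₀
  rw [hexpand h hh, hexpand₀, proxObjective]
  simp only [inner_zero_left, sub_zero, norm_zero, ne_eq, OfNat.ofNat_ne_zero,
    not_false_eq_true, zero_pow, mul_zero, tsum_zero, zero_add, add_zero]
  rw [show d - c = -(γ * lam j * d) by linear_combination hd]
  field_simp
  ring

theorem le_proxObjective_zero (hlam : ∀ i, 0 ≤ lam i) (x : H) :
    1 / (2 * γ) * ‖x‖ ^ 2 ≤ proxObjective b lam γ 0 x := by
  rw [proxObjective, sub_zero, le_add_iff_nonneg_left]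
  exact tsum_nonneg fun i => mul_nonneg (div_nonneg (hlam i) zero_le_two) (sq_nonneg _)

theorem eq_of_proxObjective_le (hlam : ∀ i, 0 ≤ lam i) (hγ : 0 < γ)
    (hsum : ∀ x : H, Summable fun i => lam i / 2 * ⟪x, b i⟫ ^ 2) (c : ℝ) (j : ι) {p : H}
    (hp : ∀ x, proxObjective b lam γ (c • b j) p ≤ proxObjective b lam γ (c • b j) x) :
    p = (c / (1 + γ * lam j)) • b j := by
  set x₀ := (c / (1 + γ * lam j)) • b j
  have hd : c / (1 + γ * lam j) * (1 + γ * lam j) = c :=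
    div_mul_cancel₀ c (by nlinarith [hlam j] : 1 + γ * lam j ≠ 0)
  have hsplit := proxObjective_smul_add hγ.ne' hd (hsum (p - x₀))
  rw [sub_add_cancel] at hsplit
  have hnorm : 1 / (2 * γ) * ‖p - x₀‖ ^ 2 ≤ 0 := by
    linarith [hp x₀, le_proxObjective_zero (b := b) (γ := γ) hlam (p - x₀)]
  have hzero : ‖p - x₀‖ ^ 2 = 0 :=
    le_antisymm (nonpos_of_mul_nonpos_right hnorm (by positivity)) (sq_nonneg _)
  simpa [sub_eq_zero] using hzero

end Prox

end InnerProductSpace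

theorem iterate_eq_pow_smul {R M : Type*} [Monoid R] [MulAction R M] {T : M → M} {v : M} {r : R}
    (hT : ∀ s : R, T (s • v) = (r * s) • v) (k : ℕ) : T^[k] v = r ^ k • v := by
  have hsemiconj : Function.Semiconj (· • v) (r * ·) T := fun s => (hT s).symm
  simpa using (hsemiconj.iterate_right k 1).symm

theorem DR_iterates_on_basis_general {H : Type*} [NormedAddCommGroup H] [InnerProductSpace ℝ H]
    {ι : Type*} (φ : HilbertBasis ι ℝ H)
    (σ β : ℝ) (hσ : 0 < σ) (lam : ι → ℝ)
    (hlam : ∀ i, σ ≤ lam i ∧ lam i ≤ β)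
    (γ α : ℝ) (hγ : 0 < γ)
    (P : H → H)
    (hP : ∀ y x : H,
      (∑' i, lam i / 2 * ⟪P y, φ i⟫ ^ 2) + 1 / (2 * γ) * ‖P y - y‖ ^ 2 ≤
        (∑' i, lam i / 2 * ⟪x, φ i⟫ ^ 2) + 1 / (2 * γ) * ‖x - y‖ ^ 2)
    (T : H → H)
    (hT : ∀ z : H, T z = (1 - α) • z + α • ((2 : ℝ) • P z - z)) :
    ∀ (j : ι) (k : ℕ),
      T^[k] (φ j) = ((1 - α + α * ((1 - γ * lam j) / (1 + γ * lam j))) ^ k) • φ j ∧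
      ‖T^[k] (φ j)‖ = |1 - α + α * ((1 - γ * lam j) / (1 + γ * lam j))| ^ k := by
  intro j k
  have hlam₀ : ∀ i, 0 ≤ lam i := fun i => hσ.le.trans (hlam i).1
  have hsum : ∀ x : H, Summable fun i => lam i / 2 * ⟪x, φ i⟫ ^ 2 :=
    φ.summable_mul_inner_sq (C := β) fun i =>
      abs_le.mpr ⟨by linarith [hlam₀ i, (hlam i).2], by linarith [hlam₀ i, (hlam i).2]⟩
  have hprox : ∀ s : ℝ, P (s • φ j) = (s / (1 + γ * lam j)) • φ j := fun s =>
    eq_of_proxObjective_le hlam₀ hγ hsum s j (hP _)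
  have hstep : ∀ s : ℝ, T (s • φ j) =
      ((1 - α + α * ((1 - γ * lam j) / (1 + γ * lam j))) * s) • φ j := fun s => by
    have : 1 + γ * lam j ≠ 0 := by nlinarith [hlam₀ j]
    rw [hT, hprox]
    match_scalars
    field_simp
    ring
  have hiter := iterate_eq_pow_smul hstep k
  refine ⟨hiter, ?_⟩
  rw [hiter, norm_smul, φ.orthonormal.1 j, mul_one, Real.norm_eq_abs, abs_pow]

/-- Douglas-Rachford iterates for `f(x) = Σ_i (λ i / 2) ⟪x, φ i⟫²` and `g ≡ 0`:
if `P y` minimizes `x ↦ f x + (1/(2γ)) ‖x - y‖²` for each `y`, and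
`T z = (1-α) • z + α • (2 • P z - z)`, then for every index `j` and every `k`,
`T^[k] (φ j) = (1 - α + α (1-γλ j)/(1+γλ j))^k • φ j`, and hence
`‖T^[k] (φ j)‖ = |1 - α + α (1-γλ j)/(1+γλ j)|^k`. -/
theorem DR_iterates_on_basis {H : Type*} [NormedAddCommGroup H] [InnerProductSpace ℝ H]
    [CompleteSpace H] {ι : Type*} (φ : HilbertBasis ι ℝ H)
    (σ β : ℝ) (hσ : 0 < σ) (hσβ : σ ≤ β) (lam : ι → ℝ)
    (hlam : ∀ i, σ ≤ lam i ∧ lam i ≤ β)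
    (γ α : ℝ) (hγ : 0 < γ) (hα₀ : 0 < α) (hα₂ : α < 2)
    (P : H → H)
    (hP : ∀ y x : H,
      (∑' i, lam i / 2 * ⟪P y, φ i⟫ ^ 2) + 1 / (2 * γ) * ‖P y - y‖ ^ 2 ≤
        (∑' i, lam i / 2 * ⟪x, φ i⟫ ^ 2) + 1 / (2 * γ) * ‖x - y‖ ^ 2)
    (T : H → H)
    (hT : ∀ z : H, T z = (1 - α) • z + α • ((2 : ℝ) • P z - z)) :
    ∀ (j : ι) (k : ℕ),
      T^[k] (φ j) = ((1 - α + α * ((1 - γ * lam j) / (1 + γ * lam j))) ^ k) • φ j ∧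
      ‖T^[k] (φ j)‖ = |1 - α + α * ((1 - γ * lam j) / (1 + γ * lam j))| ^ k :=
  DR_iterates_on_basis_general φ σ β hσ lam hlam γ α hγ P hP T hT
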